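/- Let G = (V, E_1, E_2) be a temporal graph with two layers and ℓ ∈ ℕ. Construct a 2-CNF formula φ over variables {x^v_1, x^v_2 : v ∈ V} containing, for each i ∈ {1,2} and each edge {u,v} ∈ E_i, ℓ+1 copies of the clause (x^u_i ∨ x^v_i), and for each v ∈ V the clause (¬x^v_1 ∨ ¬x^v_2). Then G admits a 1-activity timeline T covering it with Σ_{(v,a,b)∈T}(b−a) ≤ ℓ if and only if φ can be made satisfiable by deleting at most ℓ clauses. -/

import Mathlib

def covers {V : Type*} {τ : ℕ} (E : Fin τ → SimpleGraph V)
    (T : Finset (V × Fin τ × Fin τ)) : Prop :=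
  ∀ (t : Fin τ) (u v : V), (E t).Adj u v →
    ∃ x ∈ T, (x.1 = u ∨ x.1 = v) ∧ x.2.1 ≤ t ∧ t ≤ x.2.2

def isTimeline {V : Type*} [DecidableEq V] {τ : ℕ} (k : ℕ)
    (T : Finset (V × Fin τ × Fin τ)) : Prop :=
  (∀ x ∈ T, x.2.1 ≤ x.2.2) ∧
  ∀ v : V, (T.filter (fun x => x.1 = v)).card ≤ k

def phi {V : Type*} [Fintype V] [DecidableEq V] (E : Fin 2 → SimpleGraph V)
    [∀ i, DecidableRel (E i).Adj] (ℓ : ℕ) :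
    Multiset (Sym2 ((V × Fin 2) × Bool)) :=
  (ℓ + 1) • ((Finset.univ : Finset (Fin 2)).val.bind fun i =>
      (E i).edgeFinset.val.map (Sym2.map (fun v => ((v, i), true)))) +
  (Finset.univ : Finset V).val.map
    (fun v => s(((v, (0 : Fin 2)), false), ((v, (1 : Fin 2)), false)))

/-!
Read `x^v_i` as "`v` is active at time `i`" (times `1, 2` are `0, 1 : Fin 2`). Each edge
clause comes in `ℓ + 1` copies, so after at most `ℓ` deletions one copy survives, and an
assignment satisfying what is left covers every edge of every layer. A covering timeline
gives such an assignment in the same way. The vertex clause `¬x^v_1 ∨ ¬x^v_2` fails exactly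
when `v` is active at both times. That happens exactly when the interval of `v` is `[1, 2]`,
which costs 1. So deleted vertex clauses match the vertices whose interval has length 1.
-/

open Finset

theorem Multiset.mem_sub_of_card_lt_count {α : Type*} [DecidableEq α] {s t : Multiset α}
    {a : α} (h : card t < count a s) : a ∈ s - t :=
  Multiset.mem_sub.2 ((Multiset.count_le_card a t).trans_lt h)

namespace TimelineCover

def Satisfies {X : Type*} (α : X → Bool) (C : Sym2 (X × Bool)) : Prop :=
  ∃ l ∈ C, α l.1 = l.2

theorem satisfies_mk_iff {X : Type*} (α : X → Bool) (l₁ l₂ : X × Bool) :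
    Satisfies α s(l₁, l₂) ↔ α l₁.1 = l₁.2 ∨ α l₂.1 = l₂.2 := by
  simp [Satisfies]

variable {V : Type*}

def edgeClause (i : Fin 2) (u v : V) : Sym2 ((V × Fin 2) × Bool) :=
  s(((u, i), true), ((v, i), true))

def vertexClause (v : V) : Sym2 ((V × Fin 2) × Bool) :=
  s(((v, 0), false), ((v, 1), false))

theorem vertexClause_injective : Function.Injective (vertexClause (V := V)) := by
  intro a b h
  simpa [vertexClause] using h

theorem edgeClause_ne_vertexClause (i : Fin 2) (u v w : V) :
    edgeClause i u v ≠ vertexClause w := by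
  simp [edgeClause, vertexClause]

theorem satisfies_edgeClause_iff (α : V × Fin 2 → Bool) (i : Fin 2) (u v : V) :
    Satisfies α (edgeClause i u v) ↔ α (u, i) = true ∨ α (v, i) = true :=
  satisfies_mk_iff α _ _

theorem satisfies_vertexClause_iff (α : V × Fin 2 → Bool) (v : V) :
    Satisfies α (vertexClause v) ↔ ¬(α (v, 0) = true ∧ α (v, 1) = true) := by
  simp [vertexClause, satisfies_mk_iff, imp_iff_not_or]

section Formula

variable [Fintype V] (E : Fin 2 → SimpleGraph V) [∀ i, DecidableRel (E i).Adj]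

def edgeClauses : Multiset (Sym2 ((V × Fin 2) × Bool)) :=
  (univ : Finset (Fin 2)).val.bind fun i =>
    (E i).edgeFinset.val.map (Sym2.map (fun v => ((v, i), true)))

variable {E} in
theorem mem_edgeClauses {C : Sym2 ((V × Fin 2) × Bool)} :
    C ∈ edgeClauses E ↔ ∃ i u v, (E i).Adj u v ∧ edgeClause i u v = C := by
  simp only [edgeClauses, Multiset.mem_bind, Multiset.mem_map, Finset.mem_val,
    mem_univ, true_and, Sym2.exists, SimpleGraph.mem_edgeFinset, SimpleGraph.mem_edgeSet,
    Sym2.map_mk, edgeClause]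

variable [DecidableEq V]

theorem phi_eq (ℓ : ℕ) : phi E ℓ = (ℓ + 1) • edgeClauses E + univ.val.map vertexClause :=
  rfl

variable {E}

theorem mem_phi {ℓ : ℕ} {C : Sym2 ((V × Fin 2) × Bool)} :
    C ∈ phi E ℓ ↔
      (∃ i u v, (E i).Adj u v ∧ edgeClause i u v = C) ∨ ∃ v, vertexClause v = C := by
  simp [phi_eq, Multiset.mem_nsmul, mem_edgeClauses]

theorem count_vertexClause_phi (ℓ : ℕ) (v : V) :
    Multiset.count (vertexClause v) (phi E ℓ) = 1 := by
  have hv : vertexClause v ∉ edgeClauses E := by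
    simp [mem_edgeClauses, edgeClause_ne_vertexClause]
  rw [phi_eq, Multiset.count_add, Multiset.count_nsmul, Multiset.count_eq_zero_of_notMem hv,
    Multiset.count_map_eq_count' _ _ vertexClause_injective,
    Multiset.count_eq_one_of_mem univ.nodup (mem_univ v)]
  rfl

theorem lt_count_edgeClause_phi (ℓ : ℕ) {i : Fin 2} {u v : V} (h : (E i).Adj u v) :
    ℓ < Multiset.count (edgeClause i u v) (phi E ℓ) := by
  have : 0 < Multiset.count (edgeClause i u v) (edgeClauses E) :=
    Multiset.count_pos.2 (mem_edgeClauses.2 ⟨i, u, v, h, rfl⟩)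
  rw [phi_eq, Multiset.count_add, Multiset.count_nsmul]
  nlinarith

theorem satisfies_edgeClause_of_card_le {ℓ : ℕ} {D : Multiset (Sym2 ((V × Fin 2) × Bool))}
    {α : V × Fin 2 → Bool} (hD : Multiset.card D ≤ ℓ)
    (hα : ∀ C ∈ phi E ℓ - D, Satisfies α C) {i : Fin 2} {u v : V} (h : (E i).Adj u v) :
    α (u, i) = true ∨ α (v, i) = true :=
  (satisfies_edgeClause_iff α i u v).1 <| hα _ <|
    Multiset.mem_sub_of_card_lt_count (hD.trans_lt (lt_count_edgeClause_phi ℓ h))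

theorem vertexClause_mem_phi_sub_iff {ℓ : ℕ} {D : Multiset (Sym2 ((V × Fin 2) × Bool))}
    {v : V} : vertexClause v ∈ phi E ℓ - D ↔ vertexClause v ∉ D := by
  rw [Multiset.mem_sub, count_vertexClause_phi, Nat.lt_one_iff, Multiset.count_eq_zero]

end Formula

section FromTimeline

variable [DecidableEq V]

def activeAt (T : Finset (V × Fin 2 × Fin 2)) (p : V × Fin 2) : Bool :=
  decide (∃ x ∈ T, x.1 = p.1 ∧ x.2.1 ≤ p.2 ∧ p.2 ≤ x.2.2)

variable {T : Finset (V × Fin 2 × Fin 2)}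

theorem activeAt_of_covers {E : Fin 2 → SimpleGraph V} (hT : covers E T) {i : Fin 2} {u v : V}
    (h : (E i).Adj u v) : activeAt T (u, i) = true ∨ activeAt T (v, i) = true := by
  obtain ⟨x, hx, hu | hv, hxi⟩ := hT i u v h
  · exact Or.inl (decide_eq_true ⟨x, hx, hu, hxi⟩)
  · exact Or.inr (decide_eq_true ⟨x, hx, hv, hxi⟩)

theorem mem_of_activeAt_zero_one (hT : isTimeline 1 T) {w : V}
    (h₀ : activeAt T (w, 0) = true) (h₁ : activeAt T (w, 1) = true) : (w, 0, 1) ∈ T := by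
  obtain ⟨x, hx, hxw, hx₀, -⟩ := of_decide_eq_true h₀
  obtain ⟨y, hy, hyw, -, hy₁⟩ := of_decide_eq_true h₁
  obtain rfl : x = y :=
    card_le_one.1 (hT.2 w) x (mem_filter.2 ⟨hx, hxw⟩) y (mem_filter.2 ⟨hy, hyw⟩)
  have hx' : x = (w, 0, 1) := by
    ext <;> simp [hxw, Fin.le_zero_iff.1 hx₀, le_antisymm (Fin.le_last _) hy₁]
  rwa [← hx']

variable [Fintype V]

variable (T) in
def spanningVertices : Finset V :=
  {w | (w, 0, 1) ∈ T}

theorem card_spanningVertices_le : #(spanningVertices T) ≤ ∑ x ∈ T, (x.2.2.val - x.2.1.val) :=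
  calc #(spanningVertices T)
      = ∑ x ∈ (spanningVertices T).map (.sectL V ((0, 1) : Fin 2 × Fin 2)),
          (x.2.2.val - x.2.1.val) := by simp
    _ ≤ ∑ x ∈ T, (x.2.2.val - x.2.1.val) :=
      sum_le_sum_of_subset (by simp [subset_iff, spanningVertices])

variable {E : Fin 2 → SimpleGraph V} [∀ i, DecidableRel (E i).Adj]

theorem exists_deletion_of_timeline (ℓ : ℕ) (hT : isTimeline 1 T) (hcov : covers E T)
    (hcost : ∑ x ∈ T, (x.2.2.val - x.2.1.val) ≤ ℓ) :
    ∃ D, D ≤ phi E ℓ ∧ Multiset.card D ≤ ℓ ∧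
      ∃ α, ∀ C ∈ phi E ℓ - D, Satisfies α C := by
  refine ⟨(spanningVertices T).val.map vertexClause, ?_, ?_, activeAt T, ?_⟩
  · exact (Multiset.map_le_map (val_le_iff.2 (subset_univ _))).trans (Multiset.le_add_left _ _)
  · simpa using card_spanningVertices_le.trans hcost
  · intro C hC
    rcases mem_phi.1 (Multiset.mem_of_le tsub_le_self hC) with ⟨i, u, v, h, rfl⟩ | ⟨w, rfl⟩
    · exact (satisfies_edgeClause_iff _ _ _ _).2 (activeAt_of_covers hcov h)
    · rw [satisfies_vertexClause_iff]
      rintro ⟨h₀, h₁⟩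
      refine vertexClause_mem_phi_sub_iff.1 hC (Multiset.mem_map_of_mem _ ?_)
      simpa [spanningVertices] using mem_of_activeAt_zero_one hT h₀ h₁

end FromTimeline

section FromAssignment

variable (α : V × Fin 2 → Bool)

-- For a vertex active at neither time this is the reversed pair `(1, 0)`;
-- `timelineOf` omits such vertices.
def activeInterval (v : V) : Fin 2 × Fin 2 :=
  (if α (v, 0) then 0 else 1, if α (v, 1) then 1 else 0)

variable {α}

theorem mem_activeInterval {v : V} {i : Fin 2} (h : α (v, i) = true) :
    (activeInterval α v).1 ≤ i ∧ i ≤ (activeInterval α v).2 := by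
  fin_cases i
  · simp_all [activeInterval]
  · simp_all [activeInterval]
    split_ifs <;> decide

theorem activeInterval_fst_le_snd {v : V} (h : ∃ i, α (v, i) = true) :
    (activeInterval α v).1 ≤ (activeInterval α v).2 :=
  let ⟨_, hi⟩ := h
  (mem_activeInterval hi).1.trans (mem_activeInterval hi).2

variable [Fintype V]

variable (α) in
def timelineOf : Finset (V × Fin 2 × Fin 2) :=
  ({v | ∃ i, α (v, i) = true} : Finset V).map
    ⟨fun v => (v, activeInterval α v), fun _ _ h => congrArg Prod.fst h⟩

theorem mk_mem_timelineOf {v : V} {i : Fin 2} (h : α (v, i) = true) :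
    (v, activeInterval α v) ∈ timelineOf α :=
  mem_map_of_mem _ (mem_filter.2 ⟨mem_univ v, i, h⟩)

theorem isTimeline_timelineOf [DecidableEq V] : isTimeline 1 (timelineOf α) := by
  refine ⟨?_, fun v => card_le_one.2 ?_⟩
  · simp only [timelineOf, mem_map, mem_filter, mem_univ, true_and]
    rintro _ ⟨v, hv, rfl⟩
    exact activeInterval_fst_le_snd hv
  · simp only [timelineOf, mem_filter, mem_map]
    rintro _ ⟨⟨w, -, rfl⟩, rfl⟩ _ ⟨⟨w', -, rfl⟩, hw'⟩
    subst hw'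
    rfl

theorem covers_timelineOf {E : Fin 2 → SimpleGraph V}
    (hα : ∀ i u v, (E i).Adj u v → α (u, i) = true ∨ α (v, i) = true) :
    covers E (timelineOf α) := by
  intro i u v h
  rcases hα i u v h with hu | hv
  · exact ⟨_, mk_mem_timelineOf hu, Or.inl rfl, mem_activeInterval hu⟩
  · exact ⟨_, mk_mem_timelineOf hv, Or.inr rfl, mem_activeInterval hv⟩

theorem sum_length_timelineOf :
    ∑ x ∈ timelineOf α, (x.2.2.val - x.2.1.val) =
      #{v | α (v, 0) = true ∧ α (v, 1) = true} := by
  rw [timelineOf, sum_map, card_eq_sum_ones, sum_filter, sum_filter]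
  refine sum_congr rfl fun v _ => ?_
  cases h₀ : α (v, 0) <;> cases h₁ : α (v, 1) <;>
    simp [activeInterval, Fin.exists_fin_two, h₀, h₁]

variable [DecidableEq V] {E : Fin 2 → SimpleGraph V} [∀ i, DecidableRel (E i).Adj]

theorem exists_timeline_of_deletion {ℓ : ℕ} {D : Multiset (Sym2 ((V × Fin 2) × Bool))}
    (hD : Multiset.card D ≤ ℓ) (hα : ∀ C ∈ phi E ℓ - D, Satisfies α C) :
    ∃ T, isTimeline 1 T ∧ covers E T ∧ ∑ x ∈ T, (x.2.2.val - x.2.1.val) ≤ ℓ := by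
  refine ⟨timelineOf α, isTimeline_timelineOf,
    covers_timelineOf fun i u v h => satisfies_edgeClause_of_card_le hD hα h, ?_⟩
  have hmaps : Set.MapsTo vertexClause
      ({v | α (v, 0) = true ∧ α (v, 1) = true} : Finset V) D.toFinset :=
    fun v hv => Multiset.mem_toFinset.2 <| not_not.1 fun hvD =>
      (satisfies_vertexClause_iff α v).1 (hα _ (vertexClause_mem_phi_sub_iff.2 hvD))
        (by simpa using hv)
  calc ∑ x ∈ timelineOf α, (x.2.2.val - x.2.1.val)
      = #{v | α (v, 0) = true ∧ α (v, 1) = true} := sum_length_timelineOf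
    _ ≤ #D.toFinset := card_le_card_of_injOn _ hmaps vertexClause_injective.injOn
    _ ≤ Multiset.card D := Multiset.toFinset_card_le D
    _ ≤ ℓ := hD

end FromAssignment

end TimelineCover

open TimelineCover in
theorem stmt3 {V : Type*} [Fintype V] [DecidableEq V]
    (E : Fin 2 → SimpleGraph V) [∀ i, DecidableRel (E i).Adj] (ℓ : ℕ) :
    (∃ T : Finset (V × Fin 2 × Fin 2), isTimeline 1 T ∧ covers E T ∧
      ∑ x ∈ T, (x.2.2.val - x.2.1.val) ≤ ℓ) ↔
    (∃ D : Multiset (Sym2 ((V × Fin 2) × Bool)), D ≤ phi E ℓ ∧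
      Multiset.card D ≤ ℓ ∧
      ∃ α : V × Fin 2 → Bool, ∀ C ∈ phi E ℓ - D, ∃ l ∈ C, α l.1 = l.2) := by
  constructor
  · rintro ⟨T, hT, hcov, hcost⟩
    exact exists_deletion_of_timeline ℓ hT hcov hcost
  · rintro ⟨D, -, hD, α, hα⟩
    exact exists_timeline_of_deletion hD hα
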